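/- arXiv:2011.00280 — 2 statements merged into one kernel-verified Lean document; each statement's English description precedes it below -/
import Mathlib

section
/- Let A ⊊ B be simple subsets of Mⁿ (over a cycle-free injection f). Then the number of equivalence classes in the partition associated to A is strictly less than the number of equivalence classes associated to B. Consequently, A and B cannot have the same dimension. -/
open Function Set

/-- `f` has no cycles: no iterate has a fixed point. -/
def NoCycles {M : Type} (f : M → M) : Prop := ∀ n : ℕ, 0 < n → ∀ x : M, f^[n] x ≠ x

/-- `(M, f, c)` is a model of the theory `T_N`: the `c i` are pairwise distinct,
`f` is a bijection from `M` onto `M` minus the `N` points `c 1, ..., c N`,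
and `f` has no cycles. -/
structure ModelTN (N : ℕ) (M : Type) (f : M → M) (c : Fin N → M) : Prop where
  npos : 0 < N
  cinj : Function.Injective c
  finj : Function.Injective f
  frange : Set.range f = Set.univ \ Set.range c
  nocycles : NoCycles f

/-- A simple subset of `M^n`: defined by a conjunction of conditions
`x i = f^[k] (x j)` and `x i = c`. -/
def IsSimple {M : Type} (f : M → M) {n : ℕ} (A : Set (Fin n → M)) : Prop :=
  ∃ (E : List (Fin n × Fin n × ℕ)) (Cs : List (Fin n × M)),
    A = {x | (∀ p ∈ E, x p.1 = f^[p.2.2] (x p.2.1)) ∧ (∀ q ∈ Cs, x q.1 = q.2)}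

/-- Coordinate `i` is constant on `A`. -/
def ConstCoord {M : Type} {n : ℕ} (A : Set (Fin n → M)) (i : Fin n) : Prop :=
  ∃ a : M, ∀ x ∈ A, x i = a

/-- Coordinates `i`, `j` are related on `A` by an iterate of `f`. -/
def RelCoord {M : Type} (f : M → M) {n : ℕ} (A : Set (Fin n → M)) (i j : Fin n) : Prop :=
  ∃ k : ℕ, (∀ x ∈ A, x i = f^[k] (x j)) ∨ (∀ x ∈ A, x j = f^[k] (x i))

/-- `rep` enumerates the equivalence classes of the partition associated to the
simple set `A`: each `rep a` is a non-constant coordinate, distinct `rep a`'s are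
inequivalent, and every non-constant coordinate is equivalent to some `rep a`. -/
def ClassRep {M : Type} (f : M → M) {n : ℕ} (A : Set (Fin n → M)) {d : ℕ}
    (rep : Fin d → Fin n) : Prop :=
  (∀ a, ¬ ConstCoord A (rep a)) ∧
  (∀ a b, a ≠ b → ¬ RelCoord f A (rep a) (rep b)) ∧
  (∀ i, ¬ ConstCoord A i → ∃ a, RelCoord f A i (rep a))

/-- Closed sets of the topology generated by the simple sets: finite unions of simple sets. -/
def ClosedInTop {M : Type} (f : M → M) {n : ℕ} (A : Set (Fin n → M)) : Prop :=
  ∃ l : List (Set (Fin n → M)), (∀ s ∈ l, IsSimple f s) ∧ A = {x | ∃ s ∈ l, x ∈ s}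

/-- Closure in the topology generated by the simple sets. -/
def clTop {M : Type} (f : M → M) {n : ℕ} (A : Set (Fin n → M)) : Set (Fin n → M) :=
  ⋂₀ {B | ClosedInTop f B ∧ A ⊆ B}

/-- There is a chain `Z 0 ⊊ Z 1 ⊊ ... ⊊ Z d ⊆ A` of nonempty simple sets. -/
def HasChain {M : Type} (f : M → M) {n : ℕ} (A : Set (Fin n → M)) (d : ℕ) : Prop :=
  ∃ Z : Fin (d+1) → Set (Fin n → M),
    StrictMono Z ∧ (∀ i, IsSimple f (Z i) ∧ (Z i).Nonempty) ∧ Z (Fin.last d) ⊆ A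

/-- The dimension of a definable set is `d`: its closure contains a chain of `d+1`
nonempty simple sets but no chain of `d+2` such sets. -/
def HasDim {M : Type} (f : M → M) {n : ℕ} (A : Set (Fin n → M)) (d : ℕ) : Prop :=
  HasChain f (clTop f A) d ∧ ¬ HasChain f (clTop f A) (d+1)

/-- Function symbols of the language `L_N`: `N` constants and one unary function. -/
def LNfun (N : ℕ) : ℕ → Type
  | 0 => Fin N
  | 1 => Unit
  | _ => Empty

/-- The language `L_N = {f, c_1, ..., c_N}`. -/
def LN (N : ℕ) : FirstOrder.Language := ⟨LNfun N, fun _ => Empty⟩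

/-- The `L_N`-structure on `M` given by `f` and the constants `c`. -/
def SN {M : Type} (N : ℕ) (f : M → M) (c : Fin N → M) : (LN N).Structure M where
  funMap {k} F x :=
    match k, F, x with
    | 0, i, _ => c i
    | 1, _, x => f (x 0)
    | (_+2), F, _ => F.elim
  RelMap {k} r _ := r.elim

/-- A subset of `M^α` is definable (with parameters) in the structure `(M, f, c)`. -/
def Defble {M : Type} (N : ℕ) (f : M → M) (c : Fin N → M) {α : Type}
    (s : Set (α → M)) : Prop :=
  letI := SN N f c
  Set.Definable (Set.univ : Set M) (LN N) s

/-- The product `F × A ⊆ M^(n+1)` of a finite subset of `M` and a subset of `M^n`. -/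
def prodFS {M : Type} {n : ℕ} (F : Finset M) (A : Set (Fin n → M)) :
    Set (Fin (n+1) → M) :=
  {z | z (Fin.last n) ∈ (F : Set M) ∧ (fun i : Fin n => z i.castSucc) ∈ A}

/-- A definable injection from `A ⊆ M^n` to `B ⊆ M^m`: an injection whose
(restricted) graph is a definable subset of `M^(n+m)`. -/
def DefInjOn {M : Type} (N : ℕ) (f : M → M) (c : Fin N → M) {n m : ℕ}
    (A : Set (Fin n → M)) (B : Set (Fin m → M)) : Prop :=
  ∃ g : (Fin n → M) → (Fin m → M), Set.InjOn g A ∧ Set.MapsTo g A B ∧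
    Defble N f c {z : Fin (n+m) → M |
      (fun i : Fin n => z (Fin.castAdd m i)) ∈ A ∧
      (fun j : Fin m => z (Fin.natAdd n j)) = g (fun i : Fin n => z (Fin.castAdd m i))}

/-- A definable bijection from `A ⊆ M^n` to `B ⊆ M^m`. -/
def DefBijOn {M : Type} (N : ℕ) (f : M → M) (c : Fin N → M) {n m : ℕ}
    (A : Set (Fin n → M)) (B : Set (Fin m → M)) : Prop :=
  ∃ g : (Fin n → M) → (Fin m → M), Set.BijOn g A B ∧
    Defble N f c {z : Fin (n+m) → M |
      (fun i : Fin n => z (Fin.castAdd m i)) ∈ A ∧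
      (fun j : Fin m => z (Fin.natAdd n j)) = g (fun i : Fin n => z (Fin.castAdd m i))}

/-!
Send each class of `A` to the class of `B` containing its representative. Since `A ⊆ B`, every
relation holding on `B` holds on `A`, so this map is injective. If it were also surjective,
then the coordinates constant on `A` would be constant on `B` and coordinates related on `A`
would be related on `B`. As `f` has no cycles, the iterate relating two coordinates is
determined by a single point, so every defining condition of `A` would hold on `B`, and
`B ⊆ A`.
-/

namespace NoCycles

variable {M : Type} {f : M → M}

theorem iterate_injective (hnc : NoCycles f) (y : M) : Injective fun k : ℕ => f^[k] y :=
  Injective.of_lt_imp_ne fun p q hpq h => hnc (q - p) (by omega) (f^[p] y) <| by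
    rw [← iterate_add_apply, Nat.sub_add_cancel hpq.le]
    exact h.symm

end NoCycles

section Coordinates

variable {M : Type} {f : M → M} {n : ℕ} {A B : Set (Fin n → M)} {i j l : Fin n}

theorem ConstCoord.mono (hAB : A ⊆ B) (h : ConstCoord B i) : ConstCoord A i :=
  let ⟨a, ha⟩ := h
  ⟨a, fun x hx => ha x (hAB hx)⟩

theorem RelCoord.mono (hAB : A ⊆ B) (h : RelCoord f B i j) : RelCoord f A i j :=
  let ⟨k, hk⟩ := h
  ⟨k, hk.imp (fun h x hx => h x (hAB hx)) fun h x hx => h x (hAB hx)⟩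

theorem RelCoord.symm (h : RelCoord f A i j) : RelCoord f A j i :=
  let ⟨k, hk⟩ := h
  ⟨k, hk.symm⟩

theorem RelCoord.trans (hf : Injective f) (hij : RelCoord f A i j) (hjl : RelCoord f A j l) :
    RelCoord f A i l := by
  obtain ⟨k, hk | hk⟩ := hij <;> obtain ⟨m, hm | hm⟩ := hjl
  · exact ⟨k + m, Or.inl fun x hx => by rw [hk x hx, hm x hx, iterate_add_apply]⟩
  · rcases le_total m k with hle | hle
    · refine ⟨k - m, Or.inl fun x hx => ?_⟩
      rw [hm x hx, ← iterate_add_apply, Nat.sub_add_cancel hle, ← hk x hx]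
    · refine ⟨m - k, Or.inr fun x hx => ?_⟩
      rw [hk x hx, ← iterate_add_apply, Nat.sub_add_cancel hle, ← hm x hx]
  · rcases le_total k m with hle | hle
    · refine ⟨m - k, Or.inl fun x hx => hf.iterate k ?_⟩
      rw [← hk x hx, hm x hx, ← iterate_add_apply, Nat.add_sub_cancel' hle]
    · refine ⟨k - m, Or.inr fun x hx => hf.iterate m ?_⟩
      rw [← hm x hx, hk x hx, ← iterate_add_apply, Nat.add_sub_cancel' hle]
  · exact ⟨m + k, Or.inr fun x hx => by rw [hm x hx, hk x hx, iterate_add_apply]⟩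

theorem ConstCoord.of_relCoord (hf : Injective f) (hA : A.Nonempty) (hij : RelCoord f A i j)
    (hj : ConstCoord A j) : ConstCoord A i := by
  obtain ⟨a, ha⟩ := hj
  obtain ⟨x₀, hx₀⟩ := hA
  obtain ⟨k, hk | hk⟩ := hij
  · exact ⟨f^[k] a, fun x hx => by rw [hk x hx, ha x hx]⟩
  · refine ⟨x₀ i, fun x hx => hf.iterate k ?_⟩
    rw [← hk x hx, ← hk x₀ hx₀, ha x hx, ha x₀ hx₀]

theorem RelCoord.forall_mem_of_mem (hnc : NoCycles f) (hij : RelCoord f B i j)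
    {x₀ : Fin n → M} (hx₀ : x₀ ∈ B) {k : ℕ} (hk : x₀ i = f^[k] (x₀ j)) :
    ∀ y ∈ B, y i = f^[k] (y j) := by
  obtain ⟨m, hm | hm⟩ := hij
  · obtain rfl : k = m := hnc.iterate_injective (x₀ j) (hk.symm.trans (hm x₀ hx₀))
    exact hm
  · have hzero : m + k = 0 := hnc.iterate_injective (x₀ j) <| by
      simp only [iterate_add_apply, ← hk, ← hm x₀ hx₀, iterate_zero, id]
    obtain ⟨rfl, rfl⟩ : m = 0 ∧ k = 0 := by omega
    exact fun y hy => (hm y hy).symm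

theorem IsSimple.mem_of_forall (hA : IsSimple f A) {x : Fin n → M}
    (hconst : ∀ i a, (∀ y ∈ A, y i = a) → x i = a)
    (hrel : ∀ i j k, (∀ y ∈ A, y i = f^[k] (y j)) → x i = f^[k] (x j)) : x ∈ A := by
  obtain ⟨E, Cs, rfl⟩ := hA
  exact ⟨fun p hp => hrel p.1 p.2.1 p.2.2 fun y hy => hy.1 p hp,
    fun q hq => hconst q.1 q.2 fun y hy => hy.2 q hq⟩

theorem IsSimple.subset_of_forall_coord (hnc : NoCycles f) (hA : IsSimple f A)
    {x₀ : Fin n → M} (hx₀A : x₀ ∈ A) (hx₀B : x₀ ∈ B)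
    (hconst : ∀ i, ConstCoord A i → ConstCoord B i)
    (hrel : ∀ i j, RelCoord f A i j → RelCoord f B i j ∨ ConstCoord B i ∧ ConstCoord B j) :
    B ⊆ A := by
  intro x hx
  refine hA.mem_of_forall (fun i a hia => ?_) fun i j k hijk => ?_
  · obtain ⟨b, hb⟩ := hconst i ⟨a, hia⟩
    rw [hb x hx, ← hb x₀ hx₀B, hia x₀ hx₀A]
  · rcases hrel i j ⟨k, Or.inl hijk⟩ with hB | ⟨⟨a, ha⟩, ⟨b, hb⟩⟩
    · exact hB.forall_mem_of_mem hnc hx₀B (hijk x₀ hx₀A) x hx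
    · rw [ha x hx, hb x hx, ← ha x₀ hx₀B, ← hb x₀ hx₀B]
      exact hijk x₀ hx₀A

end Coordinates

section ClassMap

variable {M : Type} {f : M → M} {n : ℕ} {A B : Set (Fin n → M)} {dA dB : ℕ}
  {repA : Fin dA → Fin n} {repB : Fin dB → Fin n} {φ : Fin dA → Fin dB} {i j : Fin n}

theorem injective_of_classRep (hf : Injective f) (hAB : A ⊆ B) (hrA : ClassRep f A repA)
    (hφ : ∀ a, RelCoord f B (repA a) (repB (φ a))) : Injective φ := by
  intro a a' h
  by_contra hne
  refine hrA.2.1 a a' hne (RelCoord.mono hAB ?_)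
  exact (hφ a).trans hf (h ▸ (hφ a').symm)

section Surjective

variable (hf : Injective f) (hAB : A ⊆ B) (hrB : ClassRep f B repB)
  (hφ : ∀ a, RelCoord f B (repA a) (repB (φ a))) (hsurj : Surjective φ)
include hf hrB hφ hsurj

theorem exists_relCoord_classRep_of_surjective (hi : ¬ ConstCoord B i) :
    ∃ a, RelCoord f B i (repA a) := by
  obtain ⟨b, hb⟩ := hrB.2.2 i hi
  obtain ⟨a, rfl⟩ := hsurj b
  exact ⟨a, hb.trans hf (hφ a).symm⟩

include hAB

theorem constCoord_of_surjective (hA : A.Nonempty) (hrA : ClassRep f A repA)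
    (hi : ConstCoord A i) : ConstCoord B i := by
  by_contra hiB
  obtain ⟨a, ha⟩ := exists_relCoord_classRep_of_surjective hf hrB hφ hsurj hiB
  exact hrA.1 a (hi.of_relCoord hf hA (ha.mono hAB).symm)

theorem relCoord_of_surjective (hrA : ClassRep f A repA) (hij : RelCoord f A i j)
    (hi : ¬ ConstCoord B i) (hj : ¬ ConstCoord B j) : RelCoord f B i j := by
  obtain ⟨a, ha⟩ := exists_relCoord_classRep_of_surjective hf hrB hφ hsurj hi
  obtain ⟨a', ha'⟩ := exists_relCoord_classRep_of_surjective hf hrB hφ hsurj hj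
  obtain rfl : a = a' := by
    by_contra hne
    exact hrA.2.1 a a' hne (((ha.mono hAB).symm.trans hf hij).trans hf (ha'.mono hAB))
  exact ha.trans hf ha'.symm

theorem relCoord_or_constCoord_of_surjective (hA : A.Nonempty) (hrA : ClassRep f A repA)
    (hij : RelCoord f A i j) :
    RelCoord f B i j ∨ ConstCoord B i ∧ ConstCoord B j := by
  have hconst {l} : ConstCoord A l → ConstCoord B l :=
    constCoord_of_surjective hf hAB hrB hφ hsurj hA hrA
  by_cases hi : ConstCoord B i <;> by_cases hj : ConstCoord B j
  · exact Or.inr ⟨hi, hj⟩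
  · exact absurd (hconst ((hi.mono hAB).of_relCoord hf hA hij.symm)) hj
  · exact absurd (hconst ((hj.mono hAB).of_relCoord hf hA hij)) hi
  · exact Or.inl (relCoord_of_surjective hf hAB hrB hφ hsurj hrA hij hi hj)

end Surjective

end ClassMap

theorem stmt_10_general {M : Type} (f : M → M) (hf : Function.Injective f)
    (hnc : NoCycles f) {n : ℕ} (A B : Set (Fin n → M))
    (hA : IsSimple f A) (hAB : A ⊂ B) (hne : A.Nonempty)
    {dA dB : ℕ} (repA : Fin dA → Fin n) (repB : Fin dB → Fin n)
    (hrA : ClassRep f A repA) (hrB : ClassRep f B repB) :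
    dA < dB ∧ dA ≠ dB := by
  have hsub : A ⊆ B := hAB.subset
  choose φ hφ using fun a => hrB.2.2 (repA a) fun h => hrA.1 a (h.mono hsub)
  have hnsurj : ¬ Surjective φ := fun hsurj => by
    obtain ⟨x₀, hx₀⟩ := hne
    exact hAB.not_subset <| hA.subset_of_forall_coord hnc hx₀ (hsub hx₀)
      (fun _ => constCoord_of_surjective hf hsub hrB hφ hsurj ⟨x₀, hx₀⟩ hrA)
      fun _ _ => relCoord_or_constCoord_of_surjective hf hsub hrB hφ hsurj ⟨x₀, hx₀⟩ hrA
  have hlt : dA < dB := by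
    simpa using Fintype.card_lt_of_injective_not_surjective φ
      (injective_of_classRep hf hsub hrA hφ) hnsurj
  exact ⟨hlt, hlt.ne⟩

/-- If `A ⊊ B` are simple subsets of `M^n` (over a cycle-free injection `f`), `A`
nonempty, then the number of equivalence classes of the partition associated to `A` is
strictly less than that of `B`; in particular the two dimensions differ. -/
theorem stmt_10 {M : Type} (f : M → M) (hf : Function.Injective f)
    (hnc : NoCycles f) {n : ℕ} (A B : Set (Fin n → M))
    (hA : IsSimple f A) (hB : IsSimple f B) (hAB : A ⊂ B) (hne : A.Nonempty)
    {dA dB : ℕ} (repA : Fin dA → Fin n) (repB : Fin dB → Fin n)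
    (hrA : ClassRep f A repA) (hrB : ClassRep f B repB) :
    dA < dB ∧ dA ≠ dB :=
  stmt_10_general f hf hnc A B hA hAB hne repA repB hrA hrB
end

section
/- Every definable subset A of Mⁿ (M a model of T_N) can be written as a finite disjoint union A = ⊔_{i∈I} (B_i \ ⋃_{j∈I_i} B_{i,j}) where each B_i is a simple set and each B_{i,j} is a simple set properly contained in B_i. -/
open Function Set

/-!
A set `A ⊆ M^ι` is quantifier-free definable when membership in it is determined by finitely
many literals `x i = f^[k] (x j)`, `x i = a`. These sets are closed under Boolean operations and
under substitution of terms, and, in a model of `T_N`, under projection. To eliminate `y` from a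
cell, look at its positive literals mentioning `y`: `y = f^[k] y` with `k > 0` is unsatisfiable
(no cycles); `y = f^[k] (x j)` and `y = a` make `y` a term in `x`; `x i = f^[k] y` makes `y` the
`f^[k]`-preimage of `x i`, and applying the injective `f^[k]` to the remaining literals removes
`y` from them. If there is no such literal, each negative literal excludes finitely many `y`,
and `M` is infinite. Induction on formulas then shows that a definable set is determined by a
finite set `T` of literals, hence is the disjoint union of the nonempty atoms of `T` it meets. The
atom with positive literals `P` is the simple set `⋂ P` minus the simple sets `⋂ P ∩ l` for its
negative literals `l`, and these are proper because the atom is nonempty.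
-/

section Atoms

variable {X κ : Type*} (s : κ → Set X)

def DeterminedBy (T : Set κ) (A : Set X) : Prop :=
  ∀ x x', (∀ t ∈ T, x ∈ s t ↔ x' ∈ s t) → x ∈ A → x' ∈ A

def atom (T S : Set κ) : Set X := {x | ∀ t ∈ T, x ∈ s t ↔ t ∈ S}

def pattern (T : Set κ) (x : X) : Set κ := {t | t ∈ T ∧ x ∈ s t}

variable {s} {T T' : Set κ} {A : Set X}

theorem DeterminedBy.mono (hA : DeterminedBy s T A) (hTT' : T ⊆ T') : DeterminedBy s T' A :=
  fun x x' hxx' => hA x x' fun t ht => hxx' t (hTT' ht)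

theorem DeterminedBy.mem_iff (hA : DeterminedBy s T A) {x x' : X}
    (hxx' : ∀ t ∈ T, x ∈ s t ↔ x' ∈ s t) : x ∈ A ↔ x' ∈ A :=
  ⟨hA x x' hxx', hA x' x fun t ht => (hxx' t ht).symm⟩

theorem DeterminedBy.compl (hA : DeterminedBy s T A) : DeterminedBy s T Aᶜ :=
  fun x x' hxx' hx hx' => hx (hA x' x (fun t ht => (hxx' t ht).symm) hx')

theorem determinedBy_atom (T S : Set κ) : DeterminedBy s T (atom s T S) :=
  fun _ _ hxx' hx t ht => (hxx' t ht).symm.trans (hx t ht)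

theorem pattern_subset (T : Set κ) (x : X) : pattern s T x ⊆ T := fun _ ht => ht.1

theorem mem_atom_pattern (T : Set κ) (x : X) : x ∈ atom s T (pattern s T x) :=
  fun _ ht => ⟨fun hx => ⟨ht, hx⟩, fun h => h.2⟩

theorem DeterminedBy.atom_pattern_subset (hA : DeterminedBy s T A) {x : X} (hx : x ∈ A) :
    atom s T (pattern s T x) ⊆ A :=
  fun x' hx' => hA x x' (fun t ht => (mem_atom_pattern T x t ht).trans (hx' t ht).symm) hx

theorem DeterminedBy.eq_biUnion_atom (hA : DeterminedBy s T A) :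
    A = ⋃ S ∈ pattern s T '' A, atom s T S := by
  ext x
  simp only [mem_iUnion, mem_image, exists_prop]
  constructor
  · exact fun hx => ⟨_, ⟨x, hx, rfl⟩, mem_atom_pattern T x⟩
  · rintro ⟨_, ⟨y, hy, rfl⟩, hx⟩
    exact hA.atom_pattern_subset hy hx

theorem Set.Finite.image_pattern (hT : T.Finite) (A : Set X) : (pattern s T '' A).Finite :=
  hT.finite_subsets.subset <| by
    rintro _ ⟨x, -, rfl⟩
    exact pattern_subset T x

theorem disjoint_atom {S S' : Set κ} (hS : S ⊆ T) (hS' : S' ⊆ T) (hne : S ≠ S') :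
    Disjoint (atom s T S) (atom s T S') := by
  refine Set.disjoint_left.mpr fun x hx hx' => hne ?_
  ext t
  exact ⟨fun ht => (hx' t (hS ht)).mp ((hx t (hS ht)).mpr ht),
    fun ht => (hx t (hS' ht)).mp ((hx' t (hS' ht)).mpr ht)⟩

theorem atom_eq_biInter_diff {S : Set κ} (hS : S ⊆ T) :
    atom s T S = (⋂ t ∈ S, s t) \ ⋃ t ∈ T \ S, s t := by
  ext x
  simp only [atom, mem_ofPred_eq, mem_sdiff, mem_iInter, mem_iUnion, exists_prop, not_exists,
    not_and]
  constructor
  · exact fun hx => ⟨fun t ht => (hx t (hS ht)).mpr ht,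
      fun t ⟨ht, htS⟩ hxt => htS ((hx t ht).mp hxt)⟩
  · rintro ⟨hpos, hneg⟩ t ht
    exact ⟨fun hxt => by_contra fun htS => hneg t ⟨ht, htS⟩ hxt, hpos t⟩

theorem DeterminedBy.exists_disjoint_iUnion_sdiff (hT : T.Finite) (hA : DeterminedBy s T A) :
    ∃ (k : ℕ) (B : Fin k → Set X) (Cs : Fin k → List (Set X)),
      (∀ i, ∃ P ⊆ T, B i = ⋂ t ∈ P, s t) ∧
      (∀ i, ∀ C ∈ Cs i, (∃ t ∈ T, C = B i ∩ s t) ∧ C ⊂ B i) ∧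
      (∀ i j, i ≠ j →
        Disjoint (B i \ {x | ∃ C ∈ Cs i, x ∈ C}) (B j \ {x | ∃ C ∈ Cs j, x ∈ C})) ∧
      A = ⋃ i, (B i \ {x | ∃ C ∈ Cs i, x ∈ C}) := by
  have := (hT.image_pattern (s := s) A).to_subtype
  set e := (Finite.equivFin (pattern s T '' A)).symm
  have he : ∀ i, (e i : Set κ) ⊆ T := fun i => by
    obtain ⟨x, -, hx⟩ := (e i).2
    exact hx ▸ pattern_subset T x
  set B : Fin _ → Set X := fun i => ⋂ t ∈ (e i : Set κ), s t
  set Cs : Fin _ → List (Set X) := fun i =>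
    (hT.sdiff (t := e i)).toFinset.toList.map fun t => B i ∩ s t
  have hmemCs : ∀ i C, C ∈ Cs i ↔ ∃ t ∈ T \ e i, C = B i ∩ s t := fun i C => by
    simp only [Cs, List.mem_map, Finset.mem_toList, Set.Finite.mem_toFinset, eq_comm]
  have hatom : ∀ i, B i \ {x | ∃ C ∈ Cs i, x ∈ C} = atom s T (e i) := fun i => by
    rw [atom_eq_biInter_diff (he i)]
    ext x
    simp only [mem_sdiff, mem_ofPred_eq, hmemCs, mem_iUnion, exists_prop]
    constructor
    · rintro ⟨hB, hC⟩
      exact ⟨hB, fun ⟨t, ht, hxt⟩ => hC ⟨_, ⟨t, ht, rfl⟩, hB, hxt⟩⟩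
    · rintro ⟨hB, hC⟩
      exact ⟨hB, fun ⟨_, ⟨t, ht, rfl⟩, hxt⟩ => hC ⟨t, ht, hxt.2⟩⟩
  refine ⟨_, B, Cs, fun i => ⟨_, he i, rfl⟩, fun i C hC => ?_, fun i j hij => ?_, ?_⟩
  · obtain ⟨t, ⟨htT, hti⟩, rfl⟩ := (hmemCs i C).mp hC
    refine ⟨⟨t, htT, rfl⟩, Set.inter_subset_left, fun hsub => ?_⟩
    obtain ⟨x, -, hx⟩ := (e i).2
    have hxB : x ∈ B i := (hatom i ▸ sdiff_subset) (hx ▸ mem_atom_pattern T x)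
    exact hti (hx ▸ ⟨htT, (hsub hxB).2⟩)
  · rw [hatom, hatom]
    exact disjoint_atom (he i) (he j) fun h => hij (e.injective (Subtype.ext h))
  · simp only [hatom]
    conv_lhs => rw [hA.eq_biUnion_atom]
    rw [biUnion_eq_iUnion]
    exact (e.iSup_comp (g := fun S => atom s T S.1)).symm

end Atoms

section Literals

variable {M : Type} {ι κ : Type*}

abbrev Lit (M : Type) (ι : Type*) := (ι × ι × ℕ) ⊕ (ι × M)

def litSet (f : M → M) : Lit M ι → Set (ι → M)
  | .inl (i, j, k) => {x | x i = f^[k] (x j)}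
  | .inr (i, a) => {x | x i = a}

def Lit.map (σ : ι → κ) : Lit M ι → Lit M κ
  | .inl (i, j, k) => .inl (σ i, σ j, k)
  | .inr (i, a) => .inr (σ i, a)

theorem Lit.map_injective {σ : ι → κ} (hσ : Injective σ) : Injective (Lit.map (M := M) σ) := by
  rintro (⟨i, j, k⟩ | ⟨i, a⟩) (⟨i', j', k'⟩ | ⟨i', a'⟩) h <;> simp_all [Lit.map, hσ.eq_iff]

theorem mem_litSet_map {f : M → M} (σ : ι → κ) (l : Lit M ι) (x : κ → M) :
    x ∈ litSet f (l.map σ) ↔ x ∘ σ ∈ litSet f l := by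
  rcases l with ⟨i, j, k⟩ | ⟨i, a⟩ <;> rfl

/-- Membership is a Boolean combination of finitely many literals. -/
def QFDefinable (f : M → M) (A : Set (ι → M)) : Prop :=
  ∃ T : Set (Lit M ι), T.Finite ∧ DeterminedBy (litSet f) T A

variable {f : M → M}

theorem qfDefinable_litSet (l : Lit M ι) : QFDefinable f (litSet f l) :=
  ⟨{l}, finite_singleton l, fun _ _ hxx' => (hxx' l rfl).mp⟩

theorem qfDefinable_atom {T : Set (Lit M ι)} (hT : T.Finite) (S : Set (Lit M ι)) :
    QFDefinable f (atom (litSet f) T S) :=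
  ⟨T, hT, determinedBy_atom T S⟩

theorem qfDefinable_empty : QFDefinable f (∅ : Set (ι → M)) :=
  ⟨∅, finite_empty, fun _ _ _ hx => hx⟩

theorem QFDefinable.compl {A : Set (ι → M)} (hA : QFDefinable f A) : QFDefinable f Aᶜ :=
  let ⟨T, hT, hAT⟩ := hA
  ⟨T, hT, hAT.compl⟩

theorem qfDefinable_univ : QFDefinable f (univ : Set (ι → M)) :=
  compl_empty (α := ι → M) ▸ qfDefinable_empty.compl

theorem qfDefinable_iUnion {J : Type*} [Finite J] {A : J → Set (ι → M)}
    (hA : ∀ j, QFDefinable f (A j)) : QFDefinable f (⋃ j, A j) := by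
  choose T hT hAT using hA
  refine ⟨⋃ j, T j, finite_iUnion hT, fun x x' hxx' hx => ?_⟩
  obtain ⟨j, hj⟩ := mem_iUnion.mp hx
  exact mem_iUnion.mpr ⟨j, (hAT j).mono (subset_iUnion T j) x x' hxx' hj⟩

theorem QFDefinable.union {A B : Set (ι → M)} (hA : QFDefinable f A) (hB : QFDefinable f B) :
    QFDefinable f (A ∪ B) := by
  rw [union_eq_iUnion]
  exact qfDefinable_iUnion (Bool.forall_bool.mpr ⟨hB, hA⟩)

theorem QFDefinable.inter_preimage {R : Set (κ → M)} (hR : QFDefinable f R)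
    {g : (κ → M) → ι → M}
    (hlit : ∀ l : Lit M ι, ∃ D, QFDefinable f D ∧ R ∩ g ⁻¹' litSet f l = R ∩ D)
    {A : Set (ι → M)} (hA : QFDefinable f A) : QFDefinable f (R ∩ g ⁻¹' A) := by
  obtain ⟨TR, hTR, hRT⟩ := hR
  obtain ⟨T, hT, hAT⟩ := hA
  choose D hD hDeq using hlit
  choose TD hTD hDT using hD
  refine ⟨TR ∪ ⋃ l ∈ T, TD l, hTR.union (hT.biUnion fun l _ => hTD l), ?_⟩
  rintro x x' hxx' ⟨hxR, hxA⟩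
  have hx'R : x' ∈ R := (hRT.mono subset_union_left) x x' hxx' hxR
  refine ⟨hx'R, hAT (g x) (g x') (fun l hl => ?_) hxA⟩
  have hD : x ∈ D l ↔ x' ∈ D l := ((hDT l).mono
    ((subset_biUnion_of_mem hl).trans subset_union_right)).mem_iff hxx'
  have hlx := congrArg (x ∈ ·) (hDeq l)
  have hlx' := congrArg (x' ∈ ·) (hDeq l)
  simp only [mem_inter_iff, mem_preimage, hxR, hx'R, true_and, eq_iff_iff] at hlx hlx'
  rw [hlx, hlx', hD]

end Literals

section TermFunctions

variable {M : Type} {ι κ : Type*} {f : M → M}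

def IsTermFun (f : M → M) (v : (ι → M) → M) : Prop :=
  (∃ k i, ∀ x, v x = f^[k] (x i)) ∨ ∃ a, ∀ x, v x = a

theorem isTermFun_apply (i : ι) : IsTermFun f fun x : ι → M => x i :=
  .inl ⟨0, i, fun _ => rfl⟩

theorem isTermFun_const (a : M) : IsTermFun f fun _ : ι → M => a :=
  .inr ⟨a, fun _ => rfl⟩

theorem IsTermFun.iterate {v : (ι → M) → M} (hv : IsTermFun f v) (k : ℕ) :
    IsTermFun f fun x => f^[k] (v x) := by
  rcases hv with ⟨m, i, hv⟩ | ⟨a, hv⟩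
  · exact .inl ⟨k + m, i, fun x => by simp only [hv, iterate_add_apply]⟩
  · exact .inr ⟨f^[k] a, fun x => by simp only [hv]⟩

theorem IsTermFun.comp {v : (κ → M) → M} (hv : IsTermFun f v) {g : (ι → M) → κ → M}
    (hg : ∀ o, IsTermFun f fun x => g x o) : IsTermFun f (v ∘ g) := by
  rcases hv with ⟨m, o, hv⟩ | ⟨a, hv⟩
  · rw [show v ∘ g = fun x => f^[m] (g x o) from funext fun x => hv (g x)]
    exact (hg o).iterate m
  · exact .inr ⟨a, fun x => hv (g x)⟩

theorem IsTermFun.exists_iterate_comm {v : (ι → M) → M} (hv : IsTermFun f v) (k : ℕ) :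
    ∃ w : (ι → M) → M, IsTermFun f w ∧ ∀ x, f^[k] (v x) = w fun o => f^[k] (x o) := by
  rcases hv with ⟨m, i, hv⟩ | ⟨a, hv⟩
  · exact ⟨fun y => f^[m] (y i), .inl ⟨m, i, fun _ => rfl⟩,
      fun x => by rw [hv, Commute.iterate_iterate_self]⟩
  · exact ⟨fun _ => f^[k] a, isTermFun_const _, fun x => by rw [hv]⟩

theorem exists_isTermFun_litSet (l : Lit M ι) :
    ∃ u w : (ι → M) → M, IsTermFun f u ∧ IsTermFun f w ∧ litSet f l = {x | u x = w x} := by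
  rcases l with ⟨i, j, k⟩ | ⟨i, a⟩
  · exact ⟨_, _, isTermFun_apply i, (isTermFun_apply j).iterate k, rfl⟩
  · exact ⟨_, _, isTermFun_apply i, isTermFun_const a, rfl⟩

end TermFunctions

namespace ModelTN

variable {N : ℕ} {M : Type} {f : M → M} {c : Fin N → M} {ι κ : Type*}

theorem injective_iterate (h : ModelTN N M f c) (k : ℕ) : Injective f^[k] := h.finj.iterate k

theorem infinite (h : ModelTN N M f c) : Infinite M := by
  set x₀ := c ⟨0, h.npos⟩
  have hne : ∀ a b : ℕ, a < b → f^[b] x₀ ≠ f^[a] x₀ := fun a b hab heq => by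
    rw [← Nat.sub_add_cancel hab.le, iterate_add_apply] at heq
    exact h.nocycles _ (Nat.sub_pos_of_lt hab) _ heq
  refine Infinite.of_injective (fun m => f^[m] x₀) fun a b hab => ?_
  rcases lt_trichotomy a b with hlt | rfl | hgt
  exacts [(hne a b hlt hab.symm).elim, rfl, (hne b a hgt hab).elim]

theorem mem_range_iterate_iff (h : ModelTN N M f c) (k : ℕ) (a : M) :
    a ∈ range f^[k] ↔ ∀ m < k, ∀ j, f^[m] (c j) ≠ a := by
  induction k generalizing a with
  | zero => simp
  | succ k ih =>
    constructor
    · rintro ⟨b, rfl⟩ m hm j hmj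
      rcases m with _ | m
      · have hc : c j ∈ range f := ⟨f^[k] b, by rw [← iterate_succ_apply' f k b, ← hmj]; rfl⟩
        rw [h.frange] at hc
        exact hc.2 ⟨j, rfl⟩
      · refine (ih (f^[k] b)).mp ⟨b, rfl⟩ m (by omega) j (h.finj ?_)
        rwa [← iterate_succ_apply' f m (c j), ← iterate_succ_apply' f k b]
    · intro hall
      obtain ⟨b, rfl⟩ : a ∈ range f := by
        rw [h.frange]
        exact ⟨trivial, fun ⟨j, hj⟩ => hall 0 k.succ_pos j hj⟩
      obtain ⟨u, rfl⟩ := (ih b).mpr fun m hm j hmj =>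
        hall (m + 1) (by omega) j (by rw [iterate_succ_apply' f m (c j), hmj])
      exact ⟨u, iterate_succ_apply' f k u⟩

theorem qfDefinable_iterate_eq_iterate (h : ModelTN N M f c) (a b : ℕ) (i j : ι) :
    QFDefinable f {x : ι → M | f^[a] (x i) = f^[b] (x j)} := by
  wlog hab : a ≤ b generalizing a b i j
  · simpa only [eq_comm] using this b a j i (le_of_not_ge hab)
  convert qfDefinable_litSet (f := f) (.inl (i, j, b - a)) using 1
  ext x
  change f^[a] (x i) = f^[b] (x j) ↔ x i = f^[b - a] (x j)
  rw [← Nat.add_sub_of_le hab, iterate_add_apply, Nat.add_sub_cancel_left]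
  exact (h.injective_iterate a).eq_iff

theorem qfDefinable_iterate_eq_const (h : ModelTN N M f c) (k : ℕ) (i : ι) (a : M) :
    QFDefinable f {x : ι → M | f^[k] (x i) = a} := by
  by_cases ha : a ∈ range f^[k]
  · obtain ⟨b, rfl⟩ := ha
    convert qfDefinable_litSet (f := f) (.inr (i, b)) using 1
    ext x
    exact (h.injective_iterate k).eq_iff
  · convert qfDefinable_empty (f := f) (ι := ι) using 1
    exact eq_empty_of_forall_notMem fun x hx => ha ⟨x i, hx⟩

theorem qfDefinable_setOf_eq (h : ModelTN N M f c) {u w : (ι → M) → M} (hu : IsTermFun f u)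
    (hw : IsTermFun f w) :
    QFDefinable f {x | u x = w x} := by
  rcases hu with ⟨a, i, hu⟩ | ⟨m, hu⟩ <;> rcases hw with ⟨b, j, hw⟩ | ⟨m', hw⟩ <;>
    simp only [hu, hw]
  · exact h.qfDefinable_iterate_eq_iterate a b i j
  · exact h.qfDefinable_iterate_eq_const a i m'
  · simpa only [eq_comm] using h.qfDefinable_iterate_eq_const b j m
  · by_cases hmm : m = m'
    · simpa only [hmm, ofPred_true] using qfDefinable_univ
    · simpa only [hmm, ofPred_false] using qfDefinable_empty

theorem qfDefinable_mem_range_iterate (h : ModelTN N M f c) (i : ι) (k : ℕ) :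
    QFDefinable f {x : ι → M | x i ∈ range f^[k]} := by
  convert (qfDefinable_iUnion fun m : Fin k => qfDefinable_iUnion fun j : Fin N =>
    qfDefinable_litSet (f := f) (.inr (i, f^[m] (c j)))).compl using 1
  ext x
  simp only [mem_ofPred_eq, h.mem_range_iterate_iff, mem_compl_iff, mem_iUnion, not_exists]
  exact ⟨fun hx m j hxm => hx m m.2 j hxm.symm, fun hx m hm j hxm => hx ⟨m, hm⟩ j hxm.symm⟩

theorem qfDefinable_preimage (h : ModelTN N M f c)
    {g : (κ → M) → ι → M} (hg : ∀ o, IsTermFun f fun x => g x o)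
    {A : Set (ι → M)} (hA : QFDefinable f A) : QFDefinable f (g ⁻¹' A) := by
  refine univ_inter (g ⁻¹' A) ▸ qfDefinable_univ.inter_preimage (fun l => ?_) hA
  obtain ⟨u, w, hu, hw, hl⟩ := exists_isTermFun_litSet (f := f) l
  exact ⟨_, h.qfDefinable_setOf_eq (hu.comp hg) (hw.comp hg), by rw [hl]; rfl⟩

theorem qfDefinable_exists_of_forced (h : ModelTN N M f c) {A : Set (Option ι → M)}
    (hA : QFDefinable f A) {y₀ : (ι → M) → M} (hy₀ : IsTermFun f y₀)
    (hforce : ∀ x y, Option.elim' y x ∈ A → y = y₀ x) :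
    QFDefinable f {x | ∃ y, Option.elim' y x ∈ A} := by
  convert h.qfDefinable_preimage (g := fun x => Option.elim' (y₀ x) x)
    (by rintro (_ | i); exacts [hy₀, isTermFun_apply i]) hA using 1
  ext x
  exact ⟨fun ⟨y, hy⟩ => by rwa [mem_preimage, ← hforce x y hy], fun hx => ⟨_, hx⟩⟩

theorem qfDefinable_exists_of_section (h : ModelTN N M f c) {A : Set (Option ι → M)}
    (hA : QFDefinable f A) (i : ι) (k : ℕ)
    (hforce : ∀ x y, Option.elim' y x ∈ A → x i = f^[k] y) :
    QFDefinable f {x | ∃ y, Option.elim' y x ∈ A} := by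
  have : Nonempty M := ⟨c ⟨0, h.npos⟩⟩
  set g : (ι → M) → Option ι → M := fun x => Option.elim' (invFun f^[k] (x i)) x
  -- A literal in `g x` holds iff it holds after applying the injective `f^[k]` to both sides,
  -- and `f^[k] ∘ g x` is a tuple of terms in `x` as long as `x i ∈ range f^[k]`.
  have hg : ∀ x, x i ∈ range f^[k] →
      (fun o => f^[k] (g x o)) = Option.elim' (x i) (f^[k] ∘ x) :=
    fun x hx => funext fun o => o.casesOn (invFun_eq hx) fun _ => rfl
  convert (h.qfDefinable_mem_range_iterate i k).inter_preimage (g := g) (fun l => ?_) hA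
    using 1
  · ext x
    refine ⟨fun ⟨y, hy⟩ => ?_, fun ⟨_, hx⟩ => ⟨_, hx⟩⟩
    have hxy := hforce x y hy
    refine ⟨⟨y, hxy.symm⟩, ?_⟩
    simpa only [g, mem_preimage, hxy, leftInverse_invFun (h.injective_iterate k) y] using hy
  obtain ⟨u, w, hu, hw, hl⟩ := exists_isTermFun_litSet (f := f) l
  obtain ⟨u', hu', hu'eq⟩ := hu.exists_iterate_comm k
  obtain ⟨w', hw', hw'eq⟩ := hw.exists_iterate_comm k
  have hcoord : ∀ o, IsTermFun f fun x : ι → M => Option.elim' (x i) (f^[k] ∘ x) o := by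
    rintro (_ | j)
    exacts [isTermFun_apply i, (isTermFun_apply j).iterate k]
  refine ⟨_, h.qfDefinable_setOf_eq (hu'.comp hcoord) (hw'.comp hcoord),
    Set.ext fun x => and_congr_right fun hx => ?_⟩
  simp only [hl, mem_preimage, mem_ofPred_eq, comp_apply, ← hg x hx, ← hu'eq, ← hw'eq]
  exact (h.injective_iterate k).eq_iff.symm

theorem finite_setOf_elim'_mem_litSet (h : ModelTN N M f c) (x : ι → M)
    {l : Lit M (Option ι)} (hl : l ∉ range (Lit.map some)) (hl₀ : l ≠ .inl (none, none, 0)) :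
    {y | Option.elim' y x ∈ litSet f l}.Finite := by
  rcases l with ⟨_ | i, _ | j, k⟩ | ⟨_ | i, a⟩
  · have hk : 0 < k := Nat.pos_of_ne_zero fun hk => hl₀ (hk ▸ rfl)
    exact (Set.finite_empty).subset fun y hy => h.nocycles k hk y hy.symm
  · exact (finite_singleton (f^[k] (x j))).subset fun y hy => hy
  · exact Subsingleton.finite fun y hy y' hy' => h.injective_iterate k (hy.symm.trans hy')
  · exact (hl ⟨.inl (i, j, k), rfl⟩).elim
  · exact (finite_singleton a).subset fun y hy => hy
  · exact (hl ⟨.inr (i, a), rfl⟩).elim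

/-- The literal `.inl (none, none, 0)` is `y = y`. -/
theorem exists_elim'_mem_atom_iff (h : ModelTN N M f c) {T S : Set (Lit M (Option ι))}
    (hT : T.Finite) (hS : ∀ l ∈ T, l ∈ S → l ∉ range (Lit.map some) → l = .inl (none, none, 0))
    (h₀ : .inl (none, none, 0) ∈ T → .inl (none, none, 0) ∈ S) (x : ι → M) :
    (∃ y, Option.elim' y x ∈ atom (litSet f) T S) ↔
      x ∈ atom (litSet f) (Lit.map some ⁻¹' T) (Lit.map some ⁻¹' S) := by
  refine ⟨fun ⟨y, hy⟩ l hl => (mem_litSet_map some l _).symm.trans (hy _ hl), fun hx => ?_⟩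
  have := h.infinite
  set bad := {l ∈ T | l ∉ range (Lit.map some) ∧ l ≠ .inl (none, none, 0)}
  have hbad : (⋃ l ∈ bad, {y | Option.elim' y x ∈ litSet f l}).Finite :=
    (hT.subset (sep_subset _ _)).biUnion fun l hl =>
      h.finite_setOf_elim'_mem_litSet x hl.2.1 hl.2.2
  obtain ⟨y, hy⟩ := hbad.infinite_compl.nonempty
  refine ⟨y, fun l hl => ?_⟩
  by_cases hlr : l ∈ range (Lit.map some)
  · obtain ⟨l, rfl⟩ := hlr
    exact (mem_litSet_map some l _).trans (hx l hl)
  by_cases hl₀ : l = .inl (none, none, 0)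
  · subst hl₀
    exact iff_of_true rfl (h₀ hl)
  exact iff_of_false (fun hyl => hy (mem_biUnion ⟨hl, hlr, hl₀⟩ hyl))
    (fun hlS => hl₀ (hS l hl hlS hlr))

theorem qfDefinable_exists_atom (h : ModelTN N M f c) {T : Set (Lit M (Option ι))}
    (hT : T.Finite) (S : Set (Lit M (Option ι))) :
    QFDefinable f {x | ∃ y, Option.elim' y x ∈ atom (litSet f) T S} := by
  have hatom := qfDefinable_atom (f := f) hT S
  by_cases hS : ∃ l ∈ T, l ∈ S ∧ l ∉ range (Lit.map some) ∧ l ≠ .inl (none, none, 0)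
  · obtain ⟨l, hlT, hlS, hl, hl₀⟩ := hS
    have hsub : ∀ x y, Option.elim' y x ∈ atom (litSet f) T S →
        Option.elim' y x ∈ litSet f l :=
      fun x y hxy => (hxy l hlT).mpr hlS
    rcases l with ⟨_ | i, _ | j, k⟩ | ⟨_ | i, a⟩
    · have hk : 0 < k := Nat.pos_of_ne_zero fun hk => hl₀ (hk ▸ rfl)
      convert qfDefinable_empty (f := f) using 1
      exact eq_empty_of_forall_notMem fun x ⟨y, hy⟩ => h.nocycles k hk y (hsub x y hy).symm
    · exact h.qfDefinable_exists_of_forced hatom ((isTermFun_apply j).iterate k) hsub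
    · exact h.qfDefinable_exists_of_section hatom i k hsub
    · exact (hl ⟨.inl (i, j, k), rfl⟩).elim
    · exact h.qfDefinable_exists_of_forced hatom (isTermFun_const a) hsub
    · exact (hl ⟨.inr (i, a), rfl⟩).elim
  push Not at hS
  by_cases h₀ : .inl (none, none, 0) ∈ T → .inl (none, none, 0) ∈ S
  · convert qfDefinable_atom (f := f) (hT.preimage
      (Lit.map_injective (Option.some_injective ι)).injOn) (Lit.map some ⁻¹' S) using 1
    ext x
    exact h.exists_elim'_mem_atom_iff hT hS h₀ x
  · push Not at h₀
    convert qfDefinable_empty (f := f) using 1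
    exact eq_empty_of_forall_notMem fun x ⟨y, hy⟩ => h₀.2 ((hy _ h₀.1).mp rfl)

theorem qfDefinable_exists (h : ModelTN N M f c) {A : Set (Option ι → M)}
    (hA : QFDefinable f A) : QFDefinable f {x | ∃ y, Option.elim' y x ∈ A} := by
  obtain ⟨T, hT, hAT⟩ := hA
  have := (hT.image_pattern (s := litSet f) A).to_subtype
  convert qfDefinable_iUnion fun S : pattern (litSet f) T '' A =>
    h.qfDefinable_exists_atom hT S.1 using 1
  conv_lhs => rw [hAT.eq_biUnion_atom]
  ext x
  simp only [mem_ofPred_eq, mem_iUnion, exists_prop, Subtype.exists]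
  exact ⟨fun ⟨y, S, hS, hy⟩ => ⟨S, hS, y, hy⟩, fun ⟨S, hS, y, hy⟩ => ⟨y, S, hS, hy⟩⟩

end ModelTN

section Formulas

open FirstOrder FirstOrder.Language

variable {N : ℕ} {M : Type} {f : M → M} {β : Type*} [(LN N).Structure M]

theorem isTermFun_realize
    (hf : ∀ (F : (LN N).Functions 1) (v : Fin 1 → M), Structure.funMap F v = f (v 0))
    (t : ((LN N)[[(univ : Set M)]]).Term β) : IsTermFun f fun x : β → M => t.realize x := by
  induction t with
  | var i => exact isTermFun_apply i
  | @func l F ts ih =>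
    rcases F with F | a
    · match l, F, ts, ih with
      | 0, F, ts, _ =>
        exact .inr ⟨Structure.funMap F finZeroElim, fun x =>
          congrArg (Structure.funMap (L := LN N) F) (Subsingleton.elim _ _)⟩
      | 1, F, ts, ih =>
        convert (ih 0).iterate 1 using 2 with x
        exact hf F _
      | _ + 2, F, _, _ => exact F.elim
    · match l, a, ts with
      | 0, a, ts => exact .inr ⟨a, fun x => rfl⟩
      | _ + 1, a, _ => exact a.elim

theorem ModelTN.qfDefinable_realize {c : Fin N → M} (h : ModelTN N M f c)
    (hf : ∀ (F : (LN N).Functions 1) (v : Fin 1 → M), Structure.funMap F v = f (v 0)) {l : ℕ}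
    (φ : ((LN N)[[(univ : Set M)]]).BoundedFormula β l) :
    QFDefinable f {z : β ⊕ Fin l → M | φ.Realize (z ∘ Sum.inl) (z ∘ Sum.inr)} := by
  induction φ with
  | falsum => exact qfDefinable_empty
  | equal t₁ t₂ =>
    simpa only [BoundedFormula.Realize, Sum.elim_comp_inl_inr] using
      h.qfDefinable_setOf_eq (isTermFun_realize hf t₁) (isTermFun_realize hf t₂)
  | rel R _ => rcases R with R | R <;> exact R.elim
  | imp φ ψ ihφ ihψ =>
    convert ihφ.compl.union ihψ using 1
    ext z
    exact imp_iff_not_or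
  | @all l φ ih =>
    -- the variable bound by `∀'` is the last one of `Fin (l + 1)`; it is sent to `none`
    set σ : β ⊕ Fin (l + 1) → Option (β ⊕ Fin l) :=
      Sum.elim (some ∘ Sum.inl) (Fin.snoc (some ∘ Sum.inr) none)
    have hσ : ∀ z y,
        Option.elim' y z ∘ σ ∘ Sum.inr = Fin.snoc (α := fun _ => M) (z ∘ Sum.inr) y :=
      fun z y => Fin.comp_snoc (Option.elim' y z) (some ∘ Sum.inr) none
    convert (h.qfDefinable_exists (h.qfDefinable_preimage (g := (· ∘ σ))
      (fun o => isTermFun_apply (σ o)) ih.compl)).compl using 1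
    ext z
    simp only [mem_ofPred_eq, BoundedFormula.realize_all, mem_compl_iff, mem_preimage,
      not_exists, not_not, comp_assoc, hσ]
    rfl

end Formulas

theorem ModelTN.qfDefinable_of_defble {N : ℕ} {M : Type} {f : M → M} {c : Fin N → M}
    (h : ModelTN N M f c) {α : Type} {A : Set (α → M)} (hA : Defble N f c A) :
    QFDefinable f A := by
  let := SN N f c
  obtain ⟨φ, rfl⟩ := hA
  convert h.qfDefinable_preimage (g := (· ∘ Sum.elim id finZeroElim))
    (fun _ => isTermFun_apply _) (h.qfDefinable_realize (fun _ _ => rfl) φ) using 1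
  ext x
  change FirstOrder.Language.BoundedFormula.Realize φ x default ↔ _
  rw [Subsingleton.elim (default : Fin 0 → M)]
  rfl

section Simple

variable {M : Type} {f : M → M} {n : ℕ}

theorem isSimple_univ : IsSimple f (univ : Set (Fin n → M)) :=
  ⟨[], [], by simp⟩

theorem IsSimple.inter {A B : Set (Fin n → M)} (hA : IsSimple f A) (hB : IsSimple f B) :
    IsSimple f (A ∩ B) := by
  obtain ⟨E, C, rfl⟩ := hA
  obtain ⟨E', C', rfl⟩ := hB
  refine ⟨E ++ E', C ++ C', ?_⟩
  ext x
  simp only [mem_inter_iff, mem_ofPred_eq, List.mem_append, or_imp, forall_and]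
  tauto

theorem isSimple_litSet (l : Lit M (Fin n)) : IsSimple f (litSet f l) := by
  rcases l with ⟨i, j, k⟩ | ⟨i, a⟩
  · exact ⟨[(i, j, k)], [], by ext; simp [litSet]⟩
  · exact ⟨[], [(i, a)], by ext; simp [litSet]⟩

theorem isSimple_biInter_litSet {P : Set (Lit M (Fin n))} (hP : P.Finite) :
    IsSimple f (⋂ l ∈ P, litSet f l) := by
  induction P, hP using Set.Finite.induction_on with
  | empty => simpa only [biInter_empty] using isSimple_univ
  | insert _ _ ih => simpa only [biInter_insert] using (isSimple_litSet _).inter ih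

end Simple

/-- Every definable subset `A ⊆ M^n` (`M` a model of `T_N`) is a finite disjoint union
`A = ⊔ᵢ (Bᵢ \ ⋃ⱼ B_{i,j})` where each `Bᵢ` is simple and each `B_{i,j}` is a simple
set properly contained in `Bᵢ`. -/
theorem stmt_16 {M : Type} (N : ℕ) (f : M → M) (c : Fin N → M)
    (h : ModelTN N M f c) {n : ℕ} (A : Set (Fin n → M))
    (hdef : Defble N f c A) :
    ∃ (k : ℕ) (B : Fin k → Set (Fin n → M)) (Cs : Fin k → List (Set (Fin n → M))),
      (∀ i, IsSimple f (B i)) ∧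
      (∀ i, ∀ s ∈ Cs i, IsSimple f s ∧ s ⊂ B i) ∧
      (∀ i j, i ≠ j →
        Disjoint (B i \ {x | ∃ s ∈ Cs i, x ∈ s}) (B j \ {x | ∃ s ∈ Cs j, x ∈ s})) ∧
      A = ⋃ i, (B i \ {x | ∃ s ∈ Cs i, x ∈ s}) := by
  obtain ⟨T, hT, hAT⟩ := h.qfDefinable_of_defble hdef
  obtain ⟨k, B, Cs, hB, hCs, hdisj, hA⟩ := hAT.exists_disjoint_iUnion_sdiff hT
  have hBsimple : ∀ i, IsSimple f (B i) := fun i => by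
    obtain ⟨P, hPT, hP⟩ := hB i
    exact hP ▸ isSimple_biInter_litSet (hT.subset hPT)
  refine ⟨k, B, Cs, hBsimple, fun i C hC => ?_, hdisj, hA⟩
  obtain ⟨⟨l, -, rfl⟩, hsub⟩ := hCs i C hC
  exact ⟨(hBsimple i).inter (isSimple_litSet l), hsub⟩
end
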